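/- arXiv:2408.08659 — 3 statements merged into one kernel-verified Lean document; each statement's English description precedes it below -/
import Mathlib

section
/- The subspace M₁ = closed span of {z^n : n ∈ ℕ, n ≠ 1} of the Hardy space H²(𝔻) (equivalently H² ⊖ ℂz) is invariant under multiplication by z² and by z³, but is not invariant under multiplication by z. -/
/-- The Hardy space `H²(𝔻)` is modelled abstractly as a complex Hilbert space `H` with a
Hilbert (orthonormal) basis `e : ℕ → H` (corresponding to the monomials `zⁿ`), and the
unilateral shift `S` (multiplication by `z`) is the bounded operator sending `e n` to `e (n+1)`.
`M₁` is the closed linear span of `{zⁿ : n ≠ 1}`, i.e. `H² ⊖ ℂz`. -/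
theorem stmt_0 {H : Type*} [NormedAddCommGroup H] [InnerProductSpace ℂ H] [CompleteSpace H]
    (e : HilbertBasis ℕ ℂ H) (S : H →L[ℂ] H) (hS : ∀ n : ℕ, S (e n) = e (n + 1))
    (M : Submodule ℂ H)
    (hM : M = (Submodule.span ℂ {x | ∃ n : ℕ, n ≠ 1 ∧ x = e n}).topologicalClosure) :
    (∀ f ∈ M, (S ^ 2) f ∈ M) ∧ (∀ f ∈ M, (S ^ 3) f ∈ M) ∧ ¬ (∀ f ∈ M, S f ∈ M) := by
  set s : Set H := {x | ∃ n : ℕ, n ≠ 1 ∧ x = e n} with hs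
  set N : Submodule ℂ H := Submodule.span ℂ s with hN
  -- generic invariance lemma for powers ≥ 2
  have key : ∀ k : ℕ, 2 ≤ k → ∀ f ∈ M, (S ^ k) f ∈ M := by
    intro k hk f hf
    have hmaps : ∀ x ∈ s, (S ^ k) x ∈ (N : Set H) := by
      rintro x ⟨n, hn, rfl⟩
      have hpow : ∀ m : ℕ, ∀ n : ℕ, (S ^ m) (e n) = e (n + m) := by
        intro m
        induction m with
        | zero => intro n; simp
        | succ m ih =>
          intro n
          rw [pow_succ', ContinuousLinearMap.mul_apply, ih, hS]; congr 1
      rw [hpow]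
      exact Submodule.subset_span ⟨n + k, by omega, rfl⟩
    have hNle : N.map ((S ^ k) : H →L[ℂ] H).toLinearMap ≤ N := by
      rw [hN, Submodule.map_span, Submodule.span_le]
      rintro y ⟨x, hx, rfl⟩
      exact hmaps x hx
    have hM' : Set.MapsTo (S ^ k) (N : Set H) (N : Set H) := by
      intro x hx
      exact hNle ⟨x, hx, rfl⟩
    have hcl := hM'.closure (ContinuousLinearMap.continuous (S ^ k))
    rw [hM] at hf ⊢
    exact hcl hf
  refine ⟨key 2 le_rfl, key 3 (by norm_num), ?_⟩
  intro hinv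
  have he0 : e 0 ∈ M := by
    rw [hM]
    exact Submodule.le_topologicalClosure _ (Submodule.subset_span ⟨0, by omega, rfl⟩)
  have he1 : e 1 ∈ M := by
    have := hinv (e 0) he0
    rwa [hS 0] at this
  -- M is orthogonal to e 1
  have horth : M ≤ (ℂ ∙ e 1)ᗮ := by
    rw [hM]
    refine Submodule.topologicalClosure_minimal _ ?_ (Submodule.isClosed_orthogonal (ℂ ∙ e 1))
    rw [Submodule.span_le]
    rintro x ⟨n, hn, rfl⟩
    rw [SetLike.mem_coe, Submodule.mem_orthogonal_singleton_iff_inner_left]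
    have := e.orthonormal.2 (fun h : n = 1 => hn h)
    simpa using this
  have h11 := horth he1
  rw [Submodule.mem_orthogonal_singleton_iff_inner_left, inner_self_eq_zero] at h11
  have : ‖e 1‖ = 1 := e.orthonormal.1 1
  rw [h11] at this
  simp at this
end

section
/- The subspace M = {(1+z)(a + bz²) : a, b ∈ ℂ} of H²(𝔻) is nearly (S²)*-invariant and nearly (S³)*-invariant, but it is not nearly S*-invariant. -/
/-!
Write `e n` for `zⁿ` and `M = {a (1 + z) + b (z² + z³)}`. A vector in the range of `Sᵏ` has
vanishing coefficients at `1, z, …, zᵏ⁻¹`, since those basis vectors are killed by `Sᵏ*`.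
For `k = 2` this forces `a = 0`, and `(S²)*` maps `b (z² + z³)` to `b (1 + z) ∈ M`; for `k = 3` it
forces `f = 0`. For `k = 1` the vector `z² + z³ = S (z + z²)` lies in `M`, but `S* (z² + z³) = z + z²`
does not, because every element of `M` has equal coefficients at `1` and `z`.
-/

open ContinuousLinearMap

section

variable {𝕜 H : Type*} [RCLike 𝕜] [NormedAddCommGroup H] [InnerProductSpace 𝕜 H]

def NearlyAdjointInvariant [CompleteSpace H] (T : H →L[𝕜] H) (M : Set H) : Prop :=
  ∀ f ∈ M, (∃ g, T g = f) → adjoint T f ∈ M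

namespace HilbertBasis

variable (e : HilbertBasis ℕ 𝕜 H)

/-- The vectors `(1 + z)(a + b z²)`, in the basis `e n ↔ zⁿ`. -/
def onePlusZMul : Set H :=
  {x | ∃ a b : 𝕜, x = a • (e 0 + e 1) + b • (e 2 + e 3)}

lemma inner_basis_smul_add_smul (a b : 𝕜) (i : ℕ) :
    inner 𝕜 (e i) (a • (e 0 + e 1) + b • (e 2 + e 3)) =
      if i ≤ 1 then a else if i ≤ 3 then b else 0 := by
  have hoe := orthonormal_iff_ite.mp e.orthonormal
  simp only [inner_add_right, inner_smul_right, hoe]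
  rcases i with _ | _ | _ | _ | i <;> simp

variable {e} {S : H →L[𝕜] H} (hS : ∀ n, S (e n) = e (n + 1))
include hS

lemma pow_shift_apply (k n : ℕ) : (S ^ k) (e n) = e (n + k) := by
  induction k with
  | zero => rfl
  | succ k ih => rw [pow_succ', mul_apply_eq_comp, ih, hS, add_assoc]

variable [CompleteSpace H]

lemma adjoint_pow_shift_apply (k m : ℕ) :
    adjoint (S ^ k) (e m) = if k ≤ m then e (m - k) else 0 := by
  have hoe := orthonormal_iff_ite.mp e.orthonormal
  apply e.repr.injective
  ext i
  split_ifs with hk <;>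
    simp only [e.repr_apply_apply, adjoint_inner_right, pow_shift_apply hS, hoe,
      map_zero, lp.coeFn_zero, Pi.zero_apply] <;>
    split_ifs <;> first | rfl | (exfalso; omega)

lemma inner_pow_shift_eq_zero {k n : ℕ} (hn : n < k) (g : H) :
    inner 𝕜 (e n) ((S ^ k) g) = 0 := by
  rw [← adjoint_inner_left, adjoint_pow_shift_apply hS, if_neg (by omega), inner_zero_left]

lemma nearlyAdjointInvariant_sq_onePlusZMul : NearlyAdjointInvariant (S ^ 2) e.onePlusZMul := by
  rintro _ ⟨a, b, rfl⟩ ⟨g, hg⟩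
  have ha := inner_pow_shift_eq_zero hS (k := 2) (n := 0) (by norm_num) g
  rw [hg, e.inner_basis_smul_add_smul] at ha
  norm_num at ha
  exact ⟨b, 0, by simp [ha, adjoint_pow_shift_apply hS]⟩

lemma nearlyAdjointInvariant_cube_onePlusZMul :
    NearlyAdjointInvariant (S ^ 3) e.onePlusZMul := by
  rintro _ ⟨a, b, rfl⟩ ⟨g, hg⟩
  have ha := inner_pow_shift_eq_zero hS (k := 3) (n := 0) (by norm_num) g
  have hb := inner_pow_shift_eq_zero hS (k := 3) (n := 2) (by norm_num) g
  rw [hg, e.inner_basis_smul_add_smul] at ha hb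
  norm_num at ha hb
  exact ⟨0, 0, by simp [ha, hb]⟩

lemma not_nearlyAdjointInvariant_onePlusZMul : ¬ NearlyAdjointInvariant S e.onePlusZMul := by
  intro h
  obtain ⟨a, b, hab⟩ := h (e 2 + e 3) ⟨0, 1, by simp⟩ ⟨e 1 + e 2, by simp [hS]⟩
  rw [← pow_one S, map_add, adjoint_pow_shift_apply hS, adjoint_pow_shift_apply hS] at hab
  have h0 := congrArg (inner 𝕜 (e 0)) hab
  have h1 := congrArg (inner 𝕜 (e 1)) hab
  rw [e.inner_basis_smul_add_smul] at h0 h1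
  norm_num [inner_add_right, orthonormal_iff_ite.mp e.orthonormal, e.orthonormal.1] at h0 h1
  exact zero_ne_one (h0.trans h1.symm)

end HilbertBasis

end

/-- Hardy space model: `H` with Hilbert basis `e n ↔ zⁿ`, shift `S : e n ↦ e (n+1)`.
`M = {(1+z)(a + bz²) : a, b ∈ ℂ}` (the span of `1+z` and `z²+z³`) is nearly
`(S²)*`-invariant and nearly `(S³)*`-invariant, but not nearly `S*`-invariant. -/
theorem stmt_14 {H : Type*} [NormedAddCommGroup H] [InnerProductSpace ℂ H] [CompleteSpace H]
    (e : HilbertBasis ℕ ℂ H) (S : H →L[ℂ] H) (hS : ∀ n : ℕ, S (e n) = e (n + 1))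
    (M : Set H)
    (hM : M = {x | ∃ a b : ℂ, x = a • (e 0 + e 1) + b • (e 2 + e 3)}) :
    (∀ f ∈ M, (∃ g, (S ^ 2) g = f) → ContinuousLinearMap.adjoint (S ^ 2) f ∈ M) ∧
    (∀ f ∈ M, (∃ g, (S ^ 3) g = f) → ContinuousLinearMap.adjoint (S ^ 3) f ∈ M) ∧
    ¬ (∀ f ∈ M, (∃ g, S g = f) → ContinuousLinearMap.adjoint S f ∈ M) := by
  subst hM
  exact ⟨HilbertBasis.nearlyAdjointInvariant_sq_onePlusZMul hS,
    HilbertBasis.nearlyAdjointInvariant_cube_onePlusZMul hS,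
    HilbertBasis.not_nearlyAdjointInvariant_onePlusZMul hS⟩
end

section
/- Let m ≥ 2 and let Θ : 𝔻 → L(ℂʳ, ℂᵐ) be an inner matrix function (Θ*Θ = I_r a.e. on the circle) with 1 ≤ r ≤ m, and suppose Θ* Σ Θ ∈ H^∞_{r×r}, where Σ is the m×m matrix [[0, z^{k+1}I_γ],[z^k I_{m−γ}, 0]]. Then the subspace M = T_m(Θ H²(𝔻, ℂʳ)) ⊆ H²(𝔻) is invariant under S^m and under S^{km+γ}, where T_m(f₀,…,f_{m−1})(z) = Σ_{l=0}^{m−1} z^l f_l(z^m). -/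
/-!
Under `T_m`, the componentwise shift on `H²(𝔻, ℂᵐ)` becomes `S^m`, and multiplication by `Σ`
becomes `S^{km+γ}`: both identities only need to be checked on the monomial basis
`z^n e_l ↦ z^{mn+l}`.  Hence `T_m` carries any subspace invariant under the shift and under `Σ`
to one invariant under `S^m` and `S^{km+γ}`.  The range of `Θ` is shift-invariant because `Θ`
commutes with the shifts, and `Σ`-invariant by the hypothesis `Θ*ΣΘ ∈ H^∞`.
-/

open Function Set

theorem ContinuousLinearMap.pow_apply_of_apply_eq_succ {R E : Type*} [Semiring R]
    [TopologicalSpace E] [AddCommMonoid E] [Module R E] (S : E →L[R] E) {e : ℕ → E}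
    (hS : ∀ n, S (e n) = e (n + 1)) (p n : ℕ) : (S ^ p) (e n) = e (n + p) := by
  have : Semiconj e Nat.succ S := fun n => (hS n).symm
  rw [FunLike.coe_pow_eq_iterate, ← this.iterate_right, Nat.succ_iterate]

namespace HilbertBasis

variable {ι 𝕜 E F : Type*} [RCLike 𝕜] [NormedAddCommGroup E] [InnerProductSpace 𝕜 E]
  [NormedAddCommGroup F] [NormedSpace 𝕜 F]

theorem ext_continuousLinearMap (b : HilbertBasis ι 𝕜 E) {f g : E →L[𝕜] F}
    (h : ∀ i, f (b i) = g (b i)) : f = g :=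
  ContinuousLinearMap.ext_on (Submodule.dense_iff_topologicalClosure_eq_top.mpr b.dense_span)
    (forall_mem_range.mpr h)

theorem semiconj_of_apply (b : HilbertBasis ι 𝕜 E) (T : E →L[𝕜] F) (A : E →L[𝕜] E)
    (B : F →L[𝕜] F) (h : ∀ i, T (A (b i)) = B (T (b i))) : Semiconj T A B :=
  DFunLike.congr_fun (b.ext_continuousLinearMap (f := T.comp A) (g := B.comp T) h)

end HilbertBasis

theorem stmt_19 (m k γ : ℕ) (hγ2 : γ < m)
    {H K Kr : Type*}
    [NormedAddCommGroup H] [InnerProductSpace ℂ H]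
    [NormedAddCommGroup K] [InnerProductSpace ℂ K]
    [NormedAddCommGroup Kr] [InnerProductSpace ℂ Kr]
    (e : HilbertBasis ℕ ℂ H) (S : H →L[ℂ] H) (hS : ∀ n : ℕ, S (e n) = e (n + 1))
    (c : HilbertBasis (Fin m × ℕ) ℂ K) (SK : K →L[ℂ] K)
    (hSK : ∀ (l : Fin m) (n : ℕ), SK (c (l, n)) = c (l, n + 1))
    (T : K ≃ₗᵢ[ℂ] H) (hT : ∀ (l : Fin m) (n : ℕ), T (c (l, n)) = e (m * n + (l : ℕ)))
    (Sg : K →L[ℂ] K)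
    (hSg1 : ∀ (j : Fin m) (n : ℕ) (h : (j : ℕ) < m - γ),
      Sg (c (j, n)) = c (⟨(j : ℕ) + γ, by omega⟩, n + k))
    (hSg2 : ∀ (j : Fin m) (n : ℕ) (h : m - γ ≤ (j : ℕ)),
      Sg (c (j, n)) = c (⟨(j : ℕ) - (m - γ), by have := j.isLt; omega⟩, n + k + 1))
    (Sr : Kr →L[ℂ] Kr)
    (Θ : Kr →L[ℂ] K) (hΘS : ∀ x, Θ (Sr x) = SK (Θ x))
    (hcond : ∀ F : Kr, ∃ G : Kr, Sg (Θ F) = Θ G)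
    (M : Set H) (hMdef : M = (fun x => T x) '' (Set.range fun y => Θ y)) :
    (∀ f ∈ M, (S ^ m) f ∈ M) ∧ (∀ f ∈ M, (S ^ (k * m + γ)) f ∈ M) := by
  have hSpow := S.pow_apply_of_apply_eq_succ hS
  have hTSK : Semiconj T SK ⇑(S ^ m) :=
    c.semiconj_of_apply T.toLinearIsometry.toContinuousLinearMap _ _
      fun ⟨l, n⟩ => show T _ = (S ^ _) (T _) by
        rw [hSK, hT, hT, hSpow]
        congr 1
        ring
  have hTSg : Semiconj T Sg ⇑(S ^ (k * m + γ)) :=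
    c.semiconj_of_apply T.toLinearIsometry.toContinuousLinearMap _ _
      fun ⟨j, n⟩ => show T _ = (S ^ _) (T _) by
        rcases lt_or_ge (j : ℕ) (m - γ) with hj | hj
        · rw [hSg1 j n hj, hT, hT, hSpow]
          congr 1
          ring
        · rw [hSg2 j n hj, hT, hT, hSpow]
          congr 1
          zify [hj, hγ2.le]
          ring
  have hΘSg : MapsTo Sg (range Θ) (range Θ) := by
    rintro _ ⟨F, rfl⟩
    exact (hcond F).imp fun G hG => hG.symm
  subst hMdef
  exact ⟨hTSK.mapsTo_image (Semiconj.mapsTo_range hΘS), hTSg.mapsTo_image hΘSg⟩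
end
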